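/- arXiv:2501.00400 — 5 statements merged into one kernel-verified Lean document; each statement's English description precedes it below -/
import Mathlib

section
/- Let n be a positive squarefree integer. The Diophantine equation n·X² − Y² − Z² = 0 has a solution in integers (X,Y,Z) ≠ (0,0,0) if and only if −1 is a quadratic residue modulo n, which holds if and only if n = 2^a·p₁·p₂⋯p_k with a ∈ {0,1} and every odd prime p_i dividing n satisfying p_i ≡ 1 (mod 4). -/
/-!
If `n X² = Y² + Z²` with `X ≠ 0`, then `n X²` is a sum of two squares, so every prime
`q ≡ 3 (mod 4)` occurs in it to an even power; as `n` is squarefree, `q` occurs in `n X²` to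
the odd power `1 + 2 v_q(X)` whenever `q ∣ n`, so no such `q` divides `n`. For squarefree `n`
this is equivalent to `-1` being a square modulo `n`, which in turn makes `n` itself a sum of
two squares, giving the solution `(1, Y, Z)`. The factorisation of `n` is a restatement of the
condition on its prime factors, since an odd prime not `≡ 3 (mod 4)` is `≡ 1 (mod 4)`.
-/

theorem Int.exists_sq_modEq_neg_one_iff_isSquare (n : ℕ) :
    (∃ x : ℤ, x ^ 2 ≡ -1 [ZMOD n]) ↔ IsSquare (-1 : ZMod n) := by
  simp only [← ZMod.intCast_eq_intCast_iff, Int.cast_pow, Int.cast_neg, Int.cast_one]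
  constructor
  · rintro ⟨x, hx⟩
    exact ⟨x, by rw [← hx, sq]⟩
  · rintro ⟨y, hy⟩
    obtain ⟨x, rfl⟩ := ZMod.intCast_surjective y
    exact ⟨x, by rw [sq, hy]⟩

theorem Nat.mod_four_ne_three_of_mul_sq_eq_sq_add_sq {n m x y q : ℕ} (hn : Squarefree n)
    (hm : m ≠ 0) (h : n * m ^ 2 = x ^ 2 + y ^ 2) (hq : q ∈ n.primeFactors) : q % 4 ≠ 3 := by
  have hqp := prime_of_mem_primeFactors hq
  have : Fact q.Prime := ⟨hqp⟩
  have hqnm : q ∈ (n * m ^ 2).primeFactors :=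
    primeFactors_mono (dvd_mul_right n _) (mul_ne_zero hn.ne_zero (pow_ne_zero 2 hm)) hq
  intro hq3
  have heven := eq_sq_add_sq_iff.mp ⟨x, y, h⟩ q hqnm hq3
  have hone : padicValNat q n = 1 := by
    rw [← factorization_def n hqp]
    exact factorization_eq_one_of_squarefree hn hqp (dvd_of_mem_primeFactors hq)
  rw [padicValNat.mul hn.ne_zero (pow_ne_zero 2 hm), padicValNat.pow, hone, add_comm] at heven
  exact not_even_iff_odd.mpr (odd_two_mul_add_one _) heven

theorem ZMod.isSquare_neg_one_of_mul_sq_eq_sq_add_sq {n m x y : ℕ} (hn : Squarefree n)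
    (hm : m ≠ 0) (h : n * m ^ 2 = x ^ 2 + y ^ 2) : IsSquare (-1 : ZMod n) :=
  (isSquare_neg_one_iff_forall_mem_primeFactors_mod_four_ne_three hn).mpr fun _ hq ↦
    Nat.mod_four_ne_three_of_mul_sq_eq_sq_add_sq hn hm h hq

theorem Nat.Prime.mod_four_eq_one_iff_ne_three {p : ℕ} (hp : p.Prime) (h2 : p ≠ 2) :
    p % 4 = 1 ↔ p % 4 ≠ 3 := by
  have := hp.mod_two_eq_one_iff_ne_two.mpr h2
  omega

theorem Nat.exists_two_pow_mul_prod_of_forall_mem_primeFactors_mod_four_ne_three {n : ℕ}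
    (hn : Squarefree n) (h : ∀ q ∈ n.primeFactors, q % 4 ≠ 3) :
    ∃ (a : ℕ) (s : Finset ℕ), a ≤ 1 ∧ (∀ p ∈ s, p.Prime ∧ p % 4 = 1) ∧
      n = 2 ^ a * ∏ p ∈ s, p := by
  have hodd : ∀ p ∈ n.primeFactors.erase 2, p.Prime ∧ p % 4 = 1 := fun p hp ↦
    have hpn := Finset.mem_of_mem_erase hp
    ⟨prime_of_mem_primeFactors hpn,
      ((prime_of_mem_primeFactors hpn).mod_four_eq_one_iff_ne_three
        (Finset.ne_of_mem_erase hp)).mpr (h p hpn)⟩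
  by_cases h2 : 2 ∈ n.primeFactors
  · refine ⟨1, _, le_rfl, hodd, ?_⟩
    rw [pow_one, Finset.mul_prod_erase _ (fun p ↦ p) h2, prod_primeFactors_of_squarefree hn]
  · refine ⟨0, _, zero_le_one, hodd, ?_⟩
    rw [Finset.erase_eq_of_notMem h2, pow_zero, one_mul, prod_primeFactors_of_squarefree hn]

theorem Nat.mod_four_ne_three_of_mem_primeFactors_two_pow_mul_prod {a q : ℕ} {s : Finset ℕ}
    (hs : ∀ p ∈ s, p.Prime ∧ p % 4 = 1) (hq : q ∈ (2 ^ a * ∏ p ∈ s, p).primeFactors) :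
    q % 4 ≠ 3 := by
  have hqp := prime_of_mem_primeFactors hq
  rcases hqp.prime.dvd_mul.mp (dvd_of_mem_primeFactors hq) with h2 | hprod
  · rw [(prime_dvd_prime_iff_eq hqp prime_two).mp (hqp.dvd_of_dvd_pow h2)]
    decide
  · obtain ⟨p, hps, hqp'⟩ := (Prime.dvd_finsetProd_iff hqp.prime _).mp hprod
    rw [(prime_dvd_prime_iff_eq hqp (hs p hps).1).mp hqp', (hs p hps).2]
    decide

theorem Nat.forall_mem_primeFactors_mod_four_ne_three_iff {n : ℕ} (hn : Squarefree n) :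
    (∀ q ∈ n.primeFactors, q % 4 ≠ 3) ↔
      ∃ (a : ℕ) (s : Finset ℕ), a ≤ 1 ∧ (∀ p ∈ s, p.Prime ∧ p % 4 = 1) ∧
        n = 2 ^ a * ∏ p ∈ s, p := by
  refine ⟨exists_two_pow_mul_prod_of_forall_mem_primeFactors_mod_four_ne_three hn, ?_⟩
  rintro ⟨a, s, -, hs, rfl⟩ q hq
  exact mod_four_ne_three_of_mem_primeFactors_two_pow_mul_prod hs hq

theorem nsq_sub_sq_sub_sq_solvable_iff_general (n : ℕ) (hsf : Squarefree n) :
    ((∃ X Y Z : ℤ, ¬(X = 0 ∧ Y = 0 ∧ Z = 0) ∧ (n : ℤ) * X ^ 2 - Y ^ 2 - Z ^ 2 = 0) ↔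
      ∃ x : ℤ, x ^ 2 ≡ -1 [ZMOD (n : ℤ)]) ∧
    ((∃ x : ℤ, x ^ 2 ≡ -1 [ZMOD (n : ℤ)]) ↔
      ∃ (a : ℕ) (s : Finset ℕ), a ≤ 1 ∧ (∀ p ∈ s, p.Prime ∧ p % 4 = 1) ∧
        n = 2 ^ a * ∏ p ∈ s, p) := by
  rw [Int.exists_sq_modEq_neg_one_iff_isSquare]
  refine ⟨⟨?_, fun h ↦ ?_⟩,
    (ZMod.isSquare_neg_one_iff_forall_mem_primeFactors_mod_four_ne_three hsf).trans
      (Nat.forall_mem_primeFactors_mod_four_ne_three_iff hsf)⟩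
  · rintro ⟨X, Y, Z, hne, h⟩
    have hX : X ≠ 0 := by
      rintro rfl
      obtain ⟨rfl, rfl⟩ : Y = 0 ∧ Z = 0 := mul_self_add_mul_self_eq_zero.mp (by linarith)
      exact hne ⟨rfl, rfl, rfl⟩
    refine ZMod.isSquare_neg_one_of_mul_sq_eq_sq_add_sq (x := Y.natAbs) (y := Z.natAbs) hsf
      (Int.natAbs_ne_zero.mpr hX) ?_
    zify
    simp only [sq_abs]
    linarith
  · obtain ⟨x, y, hxy⟩ := Nat.eq_sq_add_sq_of_isSquare_mod_neg_one h
    exact ⟨1, x, y, by simp, by push_cast [hxy]; ring⟩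

/-- For a positive squarefree integer `n`, the equation `n·X² − Y² − Z² = 0` has a nonzero
integer solution iff `−1` is a quadratic residue mod `n`, iff `n = 2^a · p₁ ⋯ p_k` with
`a ∈ {0,1}` and every odd prime `pᵢ` dividing `n` satisfying `pᵢ ≡ 1 (mod 4)`. -/
theorem nsq_sub_sq_sub_sq_solvable_iff (n : ℕ) (hn : 0 < n) (hsf : Squarefree n) :
    ((∃ X Y Z : ℤ, ¬(X = 0 ∧ Y = 0 ∧ Z = 0) ∧ (n : ℤ) * X ^ 2 - Y ^ 2 - Z ^ 2 = 0) ↔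
      ∃ x : ℤ, x ^ 2 ≡ -1 [ZMOD (n : ℤ)]) ∧
    ((∃ x : ℤ, x ^ 2 ≡ -1 [ZMOD (n : ℤ)]) ↔
      ∃ (a : ℕ) (s : Finset ℕ), a ≤ 1 ∧ (∀ p ∈ s, p.Prime ∧ p % 4 = 1) ∧
        n = 2 ^ a * ∏ p ∈ s, p) :=
  nsq_sub_sq_sub_sq_solvable_iff_general n hsf
end

section
/- (Legendre) Let a, b, c be three integers, not all of the same sign, such that the product abc is squarefree. Then the equation aX² + bY² + cZ² = 0 has a solution in integers (X,Y,Z) ≠ (0,0,0) if and only if −bc is a quadratic residue modulo |a|, −ca is a quadratic residue modulo |b|, and −ab is a quadratic residue modulo |c|. -/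
/-!
Necessity: divide a nonzero zero of `Q = aX² + bY² + cZ²` by the gcd of its coordinates. A prime
`p ∣ a` dividing `Z` would divide `Y` (as `p ∤ b`) and then `X` (as `p² ∤ a`), so `Z` is invertible
modulo `a` and `-bc ≡ (bY/Z)² [ZMOD a]`.

Sufficiency: after permuting and negating the coefficients, `a > 0 > b, c`. A square root `r` of
`-bc` modulo `a` makes `a` divide `Q` on the hyperplane `bY ≡ rZ [ZMOD a]`, and similarly modulo
`b` and `c`; by the Chinese remainder theorem `abc` divides `Q` on one hyperplane modulo `abc`.
By pigeonhole this hyperplane has a nonzero point with `X² ≤ bc`, `Y² ≤ -ca`, `Z² ≤ -ab`, where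
`-2abc < Q < abc` (strictly, as `bc` and `-ab` are squarefree), so `Q = 0` or `Q = -abc`; in the
second case an explicit identity turns the point into a zero of `Q`.
-/

def TernaryIsotropic (a b c : ℤ) : Prop :=
  ∃ X Y Z : ℤ, ¬(X = 0 ∧ Y = 0 ∧ Z = 0) ∧ a * X ^ 2 + b * Y ^ 2 + c * Z ^ 2 = 0

def LegendreConditions (a b c : ℤ) : Prop :=
  (∃ x : ℤ, x ^ 2 ≡ -(b * c) [ZMOD |a|]) ∧ (∃ y : ℤ, y ^ 2 ≡ -(c * a) [ZMOD |b|]) ∧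
    (∃ z : ℤ, z ^ 2 ≡ -(a * b) [ZMOD |c|])

namespace TernaryIsotropic

variable {a b c : ℤ}

theorem rotate (h : TernaryIsotropic a b c) : TernaryIsotropic b c a := by
  obtain ⟨X, Y, Z, hne, h⟩ := h
  exact ⟨Y, Z, X, fun ⟨hY, hZ, hX⟩ => hne ⟨hX, hY, hZ⟩, by linear_combination h⟩

theorem swap (h : TernaryIsotropic a b c) : TernaryIsotropic b a c := by
  obtain ⟨X, Y, Z, hne, h⟩ := h
  exact ⟨Y, X, Z, fun ⟨hY, hX, hZ⟩ => hne ⟨hX, hY, hZ⟩, by linear_combination h⟩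

theorem neg (h : TernaryIsotropic a b c) : TernaryIsotropic (-a) (-b) (-c) := by
  obtain ⟨X, Y, Z, hne, h⟩ := h
  exact ⟨X, Y, Z, hne, by linear_combination -h⟩

theorem exists_primitive (h : TernaryIsotropic a b c) :
    ∃ X Y Z : ℤ, (∀ d, d ∣ X → d ∣ Y → d ∣ Z → IsUnit d) ∧
      a * X ^ 2 + b * Y ^ 2 + c * Z ^ 2 = 0 := by
  obtain ⟨X, Y, Z, hne, h⟩ := h
  set g := gcd X (gcd Y Z)
  have hg : g ≠ 0 := fun hg => hne (by simpa [g, gcd_eq_zero_iff] using hg)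
  obtain ⟨X', hX⟩ : g ∣ X := gcd_dvd_left _ _
  obtain ⟨Y', hY⟩ : g ∣ Y := (gcd_dvd_right _ _).trans (gcd_dvd_left _ _)
  obtain ⟨Z', hZ⟩ : g ∣ Z := (gcd_dvd_right _ _).trans (gcd_dvd_right _ _)
  refine ⟨X', Y', Z', fun d hdX hdY hdZ => isUnit_of_dvd_one ?_, ?_⟩
  · have hgd : g * d ∣ g * 1 := by
      rw [mul_one]
      refine dvd_gcd ?_ (dvd_gcd ?_ ?_) <;> [rw [hX]; rw [hY]; rw [hZ]] <;>
        exact mul_dvd_mul_left g ‹_›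
    exact (mul_dvd_mul_iff_left hg).mp hgd
  · have : g ^ 2 * (a * X' ^ 2 + b * Y' ^ 2 + c * Z' ^ 2) = 0 := by
      rw [hX, hY, hZ] at h; linear_combination h
    exact (mul_eq_zero.mp this).resolve_left (pow_ne_zero 2 hg)

end TernaryIsotropic

namespace LegendreConditions

variable {a b c : ℤ}

theorem rotate (h : LegendreConditions a b c) : LegendreConditions b c a :=
  ⟨h.2.1, h.2.2, h.1⟩

theorem swap (h : LegendreConditions a b c) : LegendreConditions b a c := by
  obtain ⟨hx, hy, hz⟩ := h
  exact ⟨by simpa only [mul_comm] using hy, by simpa only [mul_comm] using hx,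
    by simpa only [mul_comm] using hz⟩

theorem neg (h : LegendreConditions a b c) : LegendreConditions (-a) (-b) (-c) := by
  simpa only [LegendreConditions, abs_neg, neg_mul_neg] using h

end LegendreConditions

theorem sq_modEq_neg_mul_of_primitive {a b c X Y Z : ℤ} (ha : Squarefree a) (hab : IsCoprime a b)
    (hprim : ∀ d, d ∣ X → d ∣ Y → d ∣ Z → IsUnit d) (h : a * X ^ 2 + b * Y ^ 2 + c * Z ^ 2 = 0) :
    ∃ x : ℤ, x ^ 2 ≡ -(b * c) [ZMOD a] := by
  have hZa : IsCoprime Z a := by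
    refine isCoprime_of_prime_dvd (fun h0 => ha.ne_zero h0.2) fun p hp hpZ hpa => ?_
    have hpb : ¬p ∣ b := fun hpb => hp.not_isUnit (hab.isUnit_of_dvd' hpa hpb)
    have hpY : p ∣ Y := by
      have : p ∣ b * Y ^ 2 := by
        rw [show b * Y ^ 2 = -(a * X ^ 2) - c * Z ^ 2 by linear_combination h]
        exact dvd_sub (dvd_neg.mpr (hpa.mul_right _)) ((hpZ.pow two_ne_zero).mul_left _)
      exact hp.dvd_of_dvd_pow ((hp.dvd_or_dvd this).resolve_left hpb)
    obtain ⟨a', rfl⟩ := hpa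
    obtain ⟨Y', rfl⟩ := hpY
    obtain ⟨Z', rfl⟩ := hpZ
    have hpa'X : p ∣ a' * X ^ 2 :=
      ⟨-(b * Y' ^ 2 + c * Z' ^ 2), mul_left_cancel₀ hp.ne_zero (by linear_combination h)⟩
    have hpX : p ∣ X := hp.dvd_of_dvd_pow <| (hp.dvd_or_dvd hpa'X).resolve_left
      fun hpa' => hp.not_isUnit (ha p (mul_dvd_mul_left p hpa'))
    exact hp.not_isUnit (hprim p hpX (dvd_mul_right _ _) (dvd_mul_right _ _))
  obtain ⟨u, v, huv⟩ := hZa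
  -- `u` inverts `Z` modulo `a`, so `b Y u` squares to `b² Y² / Z² ≡ -b c`.
  refine ⟨b * Y * u, (Int.modEq_iff_dvd.mpr ⟨b * u ^ 2 * X ^ 2 - b * c * v * (1 + u * Z), ?_⟩)⟩
  linear_combination (-b * u ^ 2) * h + b * c * (1 + u * Z) * huv

theorem TernaryIsotropic.sq_modEq {a b c : ℤ} (hsf : Squarefree (a * b * c))
    (h : TernaryIsotropic a b c) : ∃ x : ℤ, x ^ 2 ≡ -(b * c) [ZMOD |a|] := by
  obtain ⟨X, Y, Z, hprim, h⟩ := h.exists_primitive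
  simp only [Int.modEq_abs]
  exact sq_modEq_neg_mul_of_primitive hsf.of_mul_left.of_mul_left
    (IsRelPrime.of_squarefree_mul hsf.of_mul_left).isCoprime hprim h

theorem LegendreConditions.of_isotropic {a b c : ℤ} (hsf : Squarefree (a * b * c))
    (h : TernaryIsotropic a b c) : LegendreConditions a b c :=
  ⟨h.sq_modEq hsf, h.rotate.sq_modEq (by convert hsf using 1; ring),
    h.rotate.rotate.sq_modEq (by convert hsf using 1; ring)⟩

def VanishesOnHyperplaneMod (Q : ℤ → ℤ → ℤ → ℤ) (m : ℤ) : Prop :=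
  ∃ α β γ : ℤ, ∀ x y z : ℤ, m ∣ α * x + β * y + γ * z → m ∣ Q x y z

theorem dvd_diag_of_dvd_sub {m a b c t x y z : ℤ} (hma : m ∣ a) (hmb : IsCoprime m b)
    (ht : t ^ 2 ≡ -(b * c) [ZMOD m]) (h : m ∣ b * y - t * z) :
    m ∣ a * x ^ 2 + b * y ^ 2 + c * z ^ 2 := by
  have hbyz : m ∣ b * (b * y ^ 2 + c * z ^ 2) := by
    rw [show b * (b * y ^ 2 + c * z ^ 2) =
      (b * y - t * z) * (b * y + t * z) - z ^ 2 * (-(b * c) - t ^ 2) by ring]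
    exact dvd_sub (h.mul_right _) (ht.dvd.mul_left _)
  rw [add_assoc]
  exact dvd_add (hma.mul_right _) (hmb.dvd_of_dvd_mul_left hbyz)

theorem VanishesOnHyperplaneMod.mul {Q : ℤ → ℤ → ℤ → ℤ} {m n : ℤ}
    (hm : VanishesOnHyperplaneMod Q m) (hn : VanishesOnHyperplaneMod Q n) (hmn : IsCoprime m n) :
    VanishesOnHyperplaneMod Q (m * n) := by
  obtain ⟨α, β, γ, hQm⟩ := hm
  obtain ⟨α', β', γ', hQn⟩ := hn
  obtain ⟨u, v, huv⟩ := hmn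
  -- Chinese remaindering of the coefficients: `v n ≡ 1 [ZMOD m]` and `u m ≡ 1 [ZMOD n]`.
  refine ⟨v * n * α + u * m * α', v * n * β + u * m * β', v * n * γ + u * m * γ',
    fun x y z hL => ?_⟩
  set L := α * x + β * y + γ * z
  set L' := α' * x + β' * y + γ' * z
  rw [show (v * n * α + u * m * α') * x + (v * n * β + u * m * β') * y
      + (v * n * γ + u * m * γ') * z = v * n * L + u * m * L' by ring] at hL
  have hmL : m ∣ L := by
    rw [show L = v * n * L + u * m * L' + m * (u * L - u * L') by linear_combination (-L) * huv]
    exact dvd_add ((dvd_mul_right m n).trans hL) (dvd_mul_right _ _)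
  have hnL' : n ∣ L' := by
    rw [show L' = v * n * L + u * m * L' + n * (v * L' - v * L) by linear_combination (-L') * huv]
    exact dvd_add ((dvd_mul_left n m).trans hL) (dvd_mul_right _ _)
  exact IsCoprime.mul_dvd ⟨u, v, huv⟩ (hQm x y z hmL) (hQn x y z hnL')

theorem vanishesOnHyperplaneMod_diag {a b c r s t : ℤ} (hsf : Squarefree (a * b * c))
    (hr : r ^ 2 ≡ -(b * c) [ZMOD a]) (hs : s ^ 2 ≡ -(c * a) [ZMOD b])
    (ht : t ^ 2 ≡ -(a * b) [ZMOD c]) :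
    VanishesOnHyperplaneMod (fun x y z => a * x ^ 2 + b * y ^ 2 + c * z ^ 2) (a * b * c) := by
  have hab : IsCoprime a b := (IsRelPrime.of_squarefree_mul hsf.of_mul_left).isCoprime
  have hbc : IsCoprime b c :=
    (IsRelPrime.of_squarefree_mul (hsf.squarefree_of_dvd ⟨a, by ring⟩)).isCoprime
  have hca : IsCoprime c a :=
    (IsRelPrime.of_squarefree_mul (hsf.squarefree_of_dvd ⟨b, by ring⟩)).isCoprime
  have hQa : VanishesOnHyperplaneMod (fun x y z => a * x ^ 2 + b * y ^ 2 + c * z ^ 2) a :=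
    ⟨0, b, -r, fun x y z h => dvd_diag_of_dvd_sub dvd_rfl hab hr (by convert h using 1; ring)⟩
  have hQb : VanishesOnHyperplaneMod (fun x y z => a * x ^ 2 + b * y ^ 2 + c * z ^ 2) b :=
    ⟨-s, 0, c, fun x y z h => by
      convert dvd_diag_of_dvd_sub (x := y) (y := z) (z := x) dvd_rfl hbc hs
        (by convert h using 1; ring) using 1
      ring⟩
  have hQc : VanishesOnHyperplaneMod (fun x y z => a * x ^ 2 + b * y ^ 2 + c * z ^ 2) c :=
    ⟨a, -t, 0, fun x y z h => by
      convert dvd_diag_of_dvd_sub (x := z) (y := x) (z := y) dvd_rfl hca ht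
        (by convert h using 1; ring) using 1
      ring⟩
  exact (hQa.mul hQb hab).mul hQc (IsRelPrime.of_squarefree_mul hsf).isCoprime

theorem exists_ne_zero_abs_le_dvd (α β γ : ℤ) {m A B C : ℕ} (hm : m ≠ 0)
    (h : m < (A + 1) * (B + 1) * (C + 1)) :
    ∃ x y z : ℤ, ¬(x = 0 ∧ y = 0 ∧ z = 0) ∧ |x| ≤ A ∧ |y| ≤ B ∧ |z| ≤ C ∧
      (m : ℤ) ∣ α * x + β * y + γ * z := by
  have : NeZero m := ⟨hm⟩
  obtain ⟨v, w, hvw, hf⟩ := Fintype.exists_ne_map_eq_of_card_lt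
    (fun v : Fin (A + 1) × Fin (B + 1) × Fin (C + 1) =>
      ((α * (v.1 : ℕ) + β * (v.2.1 : ℕ) + γ * (v.2.2 : ℕ) : ℤ) : ZMod m))
    (by simpa [mul_assoc] using h)
  have := v.1.isLt; have := v.2.1.isLt; have := v.2.2.isLt
  have := w.1.isLt; have := w.2.1.isLt; have := w.2.2.isLt
  refine ⟨(v.1 : ℕ) - (w.1 : ℕ), (v.2.1 : ℕ) - (w.2.1 : ℕ), (v.2.2 : ℕ) - (w.2.2 : ℕ), ?_,
    abs_le.mpr ⟨by omega, by omega⟩, abs_le.mpr ⟨by omega, by omega⟩,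
    abs_le.mpr ⟨by omega, by omega⟩, ?_⟩
  · rintro ⟨h₁, h₂, h₃⟩
    exact hvw (Prod.ext (Fin.ext (by omega)) (Prod.ext (Fin.ext (by omega)) (Fin.ext (by omega))))
  · have := (ZMod.intCast_eq_intCast_iff_dvd_sub _ _ _).mp hf.symm
    convert this using 1
    ring

theorem exists_ne_zero_sq_le_dvd (α β γ : ℤ) {m A B C : ℤ} (hm : 0 < m) (hA : 0 ≤ A)
    (hB : 0 ≤ B) (hC : 0 ≤ C) (h : m ^ 2 ≤ A * B * C) :
    ∃ x y z : ℤ, ¬(x = 0 ∧ y = 0 ∧ z = 0) ∧ x ^ 2 ≤ A ∧ y ^ 2 ≤ B ∧ z ^ 2 ≤ C ∧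
      m ∣ α * x + β * y + γ * z := by
  lift m to ℕ using hm.le
  lift A to ℕ using hA
  lift B to ℕ using hB
  lift C to ℕ using hC
  have hbox : m < (A.sqrt + 1) * (B.sqrt + 1) * (C.sqrt + 1) := by
    refine lt_of_pow_lt_pow_left₀ 2 (Nat.zero_le _) (lt_of_le_of_lt (by exact_mod_cast h) ?_)
    rw [mul_pow, mul_pow]
    exact Nat.mul_lt_mul'' (Nat.mul_lt_mul'' A.lt_succ_sqrt' B.lt_succ_sqrt') C.lt_succ_sqrt'
  have hsq : ∀ {x : ℤ} {N : ℕ}, |x| ≤ N.sqrt → x ^ 2 ≤ N := fun {x N} hx => by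
    rw [← sq_abs]
    exact (pow_le_pow_left₀ (abs_nonneg _) hx 2).trans (by exact_mod_cast Nat.sqrt_le' N)
  obtain ⟨x, y, z, hne, hx, hy, hz, hdvd⟩ := exists_ne_zero_abs_le_dvd α β γ (by omega) hbox
  exact ⟨x, y, z, hne, hsq hx, hsq hy, hsq hz, hdvd⟩

theorem sq_lt_of_sq_le_of_squarefree {x n : ℤ} (hn : Squarefree n) (hn1 : n ≠ 1) (h : x ^ 2 ≤ n) :
    x ^ 2 < n :=
  h.lt_of_ne fun hx => hn1 (hx ▸ Int.isUnit_sq (hn x ⟨1, by rw [← hx]; ring⟩))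

namespace TernaryIsotropic

variable {a b c : ℤ}

theorem of_dvd_of_sq_lt {x y z : ℤ} (ha : 0 < a) (hb : b < 0) (hc : c < 0)
    (hne : ¬(x = 0 ∧ y = 0 ∧ z = 0)) (hx : x ^ 2 < b * c) (hy : y ^ 2 ≤ -(c * a))
    (hz : z ^ 2 < -(a * b)) (hdvd : a * b * c ∣ a * x ^ 2 + b * y ^ 2 + c * z ^ 2) :
    TernaryIsotropic a b c := by
  obtain ⟨k, hk⟩ := hdvd
  have habc : 0 < a * b * c := by nlinarith [mul_pos_of_neg_of_neg hb hc]
  have hk : k = 0 ∨ k = -1 := by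
    have h₁ : a * x ^ 2 < a * (b * c) := mul_lt_mul_of_pos_left hx ha
    have h₂ : b * -(c * a) ≤ b * y ^ 2 := mul_le_mul_of_nonpos_left hy hb.le
    have h₃ : c * -(a * b) < c * z ^ 2 := mul_lt_mul_of_neg_left hz hc
    have : k < 1 := by nlinarith
    have : -2 < k := by nlinarith
    omega
  rcases hk with rfl | rfl
  · exact ⟨x, y, z, hne, by simpa using hk⟩
  · -- `Q (x z + b y, y z - a x, z² + a b) = (z² + a b) (Q (x, y, z) + a b c)` for the form `Q`.
    exact ⟨x * z + b * y, y * z - a * x, z ^ 2 + a * b, fun h => by linarith [h.2.2],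
      by linear_combination (z ^ 2 + a * b) * hk⟩

theorem of_neg_one_neg_one (ha : 0 < a) (h : ∃ r : ℤ, r ^ 2 ≡ -1 [ZMOD a]) :
    TernaryIsotropic a (-1) (-1) := by
  obtain ⟨r, hr⟩ := h
  lift a to ℕ using ha.le
  have hsq : IsSquare (-1 : ZMod a) :=
    ⟨r, by rw [← sq]; exact_mod_cast ((ZMod.intCast_eq_intCast_iff _ _ _).mpr hr).symm⟩
  obtain ⟨u, v, huv⟩ := Nat.eq_sq_add_sq_of_isSquare_mod_neg_one hsq
  exact ⟨1, u, v, by simp, by rw [huv]; push_cast; ring⟩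

theorem of_pos_neg_neg (ha : 0 < a) (hb : b < 0) (hc : c < 0) (hsf : Squarefree (a * b * c))
    (h : LegendreConditions a b c) : TernaryIsotropic a b c := by
  obtain ⟨⟨r, hr⟩, ⟨s, hs⟩, ⟨t, ht⟩⟩ := h
  rw [Int.modEq_abs] at hr hs ht
  -- The only cases in which the bound `X² ≤ bc` or `Z² ≤ -ab` can be attained.
  by_cases hbc : b * c = 1
  · obtain ⟨rfl, rfl⟩ : b = -1 ∧ c = -1 := by
      rcases Int.eq_one_or_neg_one_of_mul_eq_one' hbc with h | h <;> omega
    exact of_neg_one_neg_one ha ⟨r, by simpa using hr⟩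
  by_cases hab : a * b = -1
  · obtain ⟨rfl, rfl⟩ : a = 1 ∧ b = -1 := by
      rcases Int.eq_one_or_neg_one_of_mul_eq_neg_one' hab with h | h <;> omega
    exact ⟨1, 1, 0, by simp, by ring⟩
  obtain ⟨α, β, γ, hQ⟩ := vanishesOnHyperplaneMod_diag hsf hr hs ht
  have habc : 0 < a * b * c := by nlinarith [mul_pos_of_neg_of_neg hb hc]
  obtain ⟨x, y, z, hne, hx, hy, hz, hdvd⟩ := exists_ne_zero_sq_le_dvd α β γ habc
    (A := b * c) (B := -(c * a)) (C := -(a * b)) (by nlinarith) (by nlinarith) (by nlinarith)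
    (le_of_eq (by ring))
  exact of_dvd_of_sq_lt ha hb hc hne
    (sq_lt_of_sq_le_of_squarefree (hsf.squarefree_of_dvd ⟨a, by ring⟩) hbc hx) hy
    (sq_lt_of_sq_le_of_squarefree (hsf.squarefree_of_dvd ⟨-c, by ring⟩) (by omega) hz)
    (hQ x y z hdvd)

theorem of_pos_neg_neg_or_neg_pos_pos (hsign : (0 < a ∧ b < 0 ∧ c < 0) ∨ (a < 0 ∧ 0 < b ∧ 0 < c))
    (hsf : Squarefree (a * b * c)) (h : LegendreConditions a b c) : TernaryIsotropic a b c := by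
  rcases hsign with ⟨ha, hb, hc⟩ | ⟨ha, hb, hc⟩
  · exact of_pos_neg_neg ha hb hc hsf h
  · simpa only [neg_neg] using (of_pos_neg_neg (neg_pos.mpr ha) (neg_lt_zero.mpr hb)
      (neg_lt_zero.mpr hc) (hsf.squarefree_of_dvd ⟨-1, by ring⟩) h.neg).neg

theorem of_legendreConditions (hsign : ¬((0 < a ∧ 0 < b ∧ 0 < c) ∨ (a < 0 ∧ b < 0 ∧ c < 0)))
    (hsf : Squarefree (a * b * c)) (h : LegendreConditions a b c) : TernaryIsotropic a b c := by
  obtain ⟨⟨ha, hb⟩, hc⟩ : (a ≠ 0 ∧ b ≠ 0) ∧ c ≠ 0 := by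
    simpa only [mul_ne_zero_iff] using hsf.ne_zero
  have hsf_bac : Squarefree (b * a * c) := by convert hsf using 1; ring
  have hsf_cab : Squarefree (c * a * b) := by convert hsf using 1; ring
  rcases ha.lt_or_gt with ha | ha <;> rcases hb.lt_or_gt with hb | hb <;>
    rcases hc.lt_or_gt with hc | hc
  · exact absurd (Or.inr ⟨ha, hb, hc⟩) hsign
  · exact (of_pos_neg_neg_or_neg_pos_pos (Or.inl ⟨hc, ha, hb⟩) hsf_cab h.rotate.rotate).rotate
  · exact (of_pos_neg_neg_or_neg_pos_pos (Or.inl ⟨hb, ha, hc⟩) hsf_bac h.swap).swap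
  · exact of_pos_neg_neg_or_neg_pos_pos (Or.inr ⟨ha, hb, hc⟩) hsf h
  · exact of_pos_neg_neg_or_neg_pos_pos (Or.inl ⟨ha, hb, hc⟩) hsf h
  · exact (of_pos_neg_neg_or_neg_pos_pos (Or.inr ⟨hb, ha, hc⟩) hsf_bac h.swap).swap
  · exact (of_pos_neg_neg_or_neg_pos_pos (Or.inr ⟨hc, ha, hb⟩) hsf_cab h.rotate.rotate).rotate
  · exact absurd (Or.inl ⟨ha, hb, hc⟩) hsign

end TernaryIsotropic

/-- (Legendre) Let `a, b, c` be integers, not all of the same sign, with `abc` squarefree.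
Then `aX² + bY² + cZ² = 0` has a nonzero integer solution if and only if `−bc`, `−ca`, `−ab`
are quadratic residues modulo `|a|`, `|b|`, `|c|` respectively. -/
theorem legendre_ternary_quadratic (a b c : ℤ)
    (hsign : ¬((0 < a ∧ 0 < b ∧ 0 < c) ∨ (a < 0 ∧ b < 0 ∧ c < 0)))
    (hsf : Squarefree (a * b * c)) :
    (∃ X Y Z : ℤ, ¬(X = 0 ∧ Y = 0 ∧ Z = 0) ∧ a * X ^ 2 + b * Y ^ 2 + c * Z ^ 2 = 0) ↔
      ((∃ x : ℤ, x ^ 2 ≡ -(b * c) [ZMOD |a|]) ∧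
        (∃ y : ℤ, y ^ 2 ≡ -(c * a) [ZMOD |b|]) ∧
        (∃ z : ℤ, z ^ 2 ≡ -(a * b) [ZMOD |c|])) :=
  ⟨LegendreConditions.of_isotropic hsf, TernaryIsotropic.of_legendreConditions hsign hsf⟩
end

section
/- Let K/ℚ be a finite Galois extension, let α ∈ K, let L = K(√α) be a quadratic extension of K, and let L̂ be the Galois closure of L over ℚ. Then the degree [L̂ : K] is a power of 2. -/
/-!
Since `K/ℚ` is normal, all embeddings of `K` into `L̂` have the same image `K'`. As `L = K(x)`,
every conjugate `f(L)` of `L` is then `K'(f x)` with `(f x)² = f(α) ∈ K'`, so `L̂ = K'(f x : f)` is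
obtained from `K'` by adjoining finitely many square roots, each step having degree `1` or `2`.
-/

open IntermediateField Polynomial

namespace IntermediateField

variable {F E : Type*} [Field F] [Field E] [Algebra F E]

theorem finrank_adjoin_simple_dvd_two_of_sq_mem {a : E}
    (ha : a ^ 2 ∈ Set.range (algebraMap F E)) : Module.finrank F F⟮a⟯ ∣ 2 := by
  obtain ⟨c, hc⟩ := ha
  have hmonic : (X ^ 2 - C c : F[X]).Monic := monic_X_pow_sub_C c two_ne_zero
  have hroot : aeval a (X ^ 2 - C c) = 0 := by simp [hc]
  have hint : IsIntegral F a := ⟨_, hmonic, hroot⟩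
  have hle : (minpoly F a).natDegree ≤ 2 := by
    simpa using natDegree_le_of_dvd (minpoly.dvd F a hroot) hmonic.ne_zero
  have hpos := minpoly.natDegree_pos hint
  rw [adjoin.finrank hint]
  interval_cases (minpoly F a).natDegree <;> norm_num

theorem exists_finrank_adjoin_eq_two_pow_of_sq_mem {s : Set E} (hs : s.Finite)
    (hsq : ∀ a ∈ s, a ^ 2 ∈ Set.range (algebraMap F E)) :
    ∃ j : ℕ, Module.finrank F (adjoin F s) = 2 ^ j := by
  induction s, hs using Set.Finite.induction_on with
  | empty => exact ⟨0, by simp⟩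
  | @insert a s _ _ ih =>
    obtain ⟨j, hj⟩ := ih fun b hb ↦ hsq b (Set.mem_insert_of_mem a hb)
    obtain ⟨c, hc⟩ := hsq a (Set.mem_insert a s)
    have ha : a ^ 2 ∈ Set.range (algebraMap (adjoin F s) E) :=
      ⟨algebraMap F _ c, by rw [← IsScalarTower.algebraMap_apply, hc]⟩
    have hmul : Module.finrank F (adjoin F (insert a s)) =
        2 ^ j * Module.finrank (adjoin F s) (adjoin F s)⟮a⟯ := by
      rw [← hj, Module.finrank_mul_finrank, Set.insert_eq, Set.union_comm,
        ← adjoin_adjoin_left]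
      rfl
    rcases (Nat.dvd_prime Nat.prime_two).1 (finrank_adjoin_simple_dvd_two_of_sq_mem ha) with h | h
    · exact ⟨j, by rw [hmul, h, mul_one]⟩
    · exact ⟨j + 1, by rw [hmul, h, pow_succ]⟩

theorem restrictScalars_adjoin_eq_adjoin_range_union {K : Type*} [Field K] [Algebra F K]
    [Algebra K E] [IsScalarTower F K E] (S : Set E) :
    (adjoin K S).restrictScalars F = adjoin F (Set.range (algebraMap K E) ∪ S) := by
  apply le_antisymm
  · intro y hy
    have hy' : y ∈ (adjoin K S).toSubfield := hy
    rw [adjoin_toSubfield] at hy'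
    exact Subfield.closure_le.2 (subset_adjoin F _) hy'
  · rw [adjoin_le_iff]
    exact Set.union_subset (adjoin.range_algebraMap_subset K S) (subset_adjoin K S)

end IntermediateField

namespace AlgHom

variable {F K L A : Type*} [Field F] [Field K] [Field L] [Field A]
  [Algebra F K] [Algebra F L] [Algebra F A]

theorem fieldRange_eq_of_normal [Normal F K] (σ τ : K →ₐ[F] A) :
    σ.fieldRange = τ.fieldRange := by
  let e : K ≃ₐ[F] σ.fieldRange := AlgEquiv.ofInjectiveField σ
  have : Normal F σ.fieldRange := Normal.of_algEquiv e
  rw [← fieldRange_of_normal (τ.comp (e.symm : σ.fieldRange →ₐ[F] K)), ← map_fieldRange,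
    AlgEquiv.fieldRange_eq_top, ← fieldRange_eq_map]

theorem fieldRange_eq_adjoin_of_adjoin_eq_top [Algebra K L] [IsScalarTower F K L]
    {S : Set L} (hS : adjoin K S = ⊤) (f : L →ₐ[F] A) :
    f.fieldRange = adjoin F ((f.comp (IsScalarTower.toAlgHom F K L)).fieldRange ∪ f '' S) := by
  rw [fieldRange_eq_map, ← restrictScalars_top (K := F) (F := K), ← hS,
    restrictScalars_adjoin_eq_adjoin_range_union, adjoin_map, Set.image_union,
    ← Set.range_comp, coe_fieldRange]
  rfl

end AlgHom

section NormalClosure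

variable {F K L A : Type*} [Field F] [Field K] [Field L] [Field A]
  [Algebra F K] [Algebra F L] [Algebra F A] [Algebra K L] [IsScalarTower F K L] [Normal F K]

theorem normalClosure_eq_restrictScalars_adjoin [Nonempty (L →ₐ[F] A)] {S : Set L}
    (hS : adjoin K S = ⊤) (σ : K →ₐ[F] A) :
    normalClosure F L A = (adjoin σ.fieldRange (⋃ f : L →ₐ[F] A, f '' S)).restrictScalars F := by
  simp_rw [normalClosure_def, AlgHom.fieldRange_eq_adjoin_of_adjoin_eq_top hS,
    AlgHom.fieldRange_eq_of_normal _ σ, ← adjoin_iUnion, Set.iUnion_union_distrib,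
    Set.iUnion_const, restrictScalars_adjoin]

theorem exists_finrank_normalClosure_eq_two_pow_mul [FiniteDimensional F K]
    [Nonempty (L →ₐ[F] A)] {x : L} (hx : x ^ 2 ∈ Set.range (algebraMap K L))
    (hgen : adjoin K {x} = ⊤) :
    ∃ j : ℕ, Module.finrank F (normalClosure F L A) = 2 ^ j * Module.finrank F K := by
  obtain ⟨f₀⟩ := ‹Nonempty (L →ₐ[F] A)›
  set σ := f₀.comp (IsScalarTower.toAlgHom F K L)
  have : FiniteDimensional K L := by
    obtain ⟨c, hc⟩ := hx
    have : FiniteDimensional K (⊤ : IntermediateField K L) :=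
      hgen ▸ adjoin.finiteDimensional (IsIntegral.of_pow two_pos (hc ▸ isIntegral_algebraMap))
    exact topEquiv.toLinearEquiv.finiteDimensional
  have : FiniteDimensional F L := Module.Finite.trans K L
  set T := ⋃ f : L →ₐ[F] A, f '' {x}
  have hT : T = Set.range fun f : L →ₐ[F] A ↦ f x := by
    simp only [T, Set.image_singleton, Set.iUnion_singleton_eq_range]
  have hsq : ∀ a ∈ T, a ^ 2 ∈ Set.range (algebraMap σ.fieldRange A) := by
    rw [hT]
    rintro _ ⟨f, rfl⟩
    obtain ⟨c, hc⟩ := hx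
    have hmem : f (algebraMap K L c) ∈ σ.fieldRange := by
      rw [AlgHom.fieldRange_eq_of_normal σ (f.comp (IsScalarTower.toAlgHom F K L))]
      exact ⟨c, rfl⟩
    exact ⟨⟨_, hmem⟩, by rw [← map_pow, ← hc]; rfl⟩
  obtain ⟨j, hj⟩ := exists_finrank_adjoin_eq_two_pow_of_sq_mem (hT ▸ Set.finite_range _) hsq
  refine ⟨j, ?_⟩
  calc Module.finrank F (normalClosure F L A)
      = Module.finrank F σ.fieldRange * Module.finrank σ.fieldRange (adjoin σ.fieldRange T) := by
        rw [normalClosure_eq_restrictScalars_adjoin hgen σ]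
        change Module.finrank F (adjoin σ.fieldRange T) = _
        exact (Module.finrank_mul_finrank _ _ _).symm
    _ = 2 ^ j * Module.finrank F K := by
        rw [hj, mul_comm, (AlgEquiv.ofInjectiveField σ).toLinearEquiv.finrank_eq]
        rfl

end NormalClosure

theorem galoisClosure_degree_pow_two_general
    (K L : Type*) [Field K] [Field L] [Algebra ℚ K] [Algebra ℚ L] [Algebra K L]
    [IsScalarTower ℚ K L] [FiniteDimensional ℚ K] [IsGalois ℚ K]
    (α : K) (x : L) (hx : x ^ 2 = algebraMap K L α)
    (hgen : IntermediateField.adjoin K {x} = ⊤) :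
    ∃ j : ℕ, Module.finrank ℚ ↥(IntermediateField.normalClosure ℚ L (AlgebraicClosure L)) =
      2 ^ j * Module.finrank ℚ K :=
  have : Nonempty (L →ₐ[ℚ] AlgebraicClosure L) := ⟨IsScalarTower.toAlgHom ℚ L _⟩
  exists_finrank_normalClosure_eq_two_pow_mul ⟨α, hx.symm⟩ hgen

/-- If `K/ℚ` is finite Galois, `α ∈ K`, and `L = K(√α)` is a quadratic extension of `K`,
then the degree over `K` of the Galois closure `L̂` of `L` over `ℚ` is a power of `2`. -/
theorem galoisClosure_degree_pow_two
    (K L : Type*) [Field K] [Field L] [Algebra ℚ K] [Algebra ℚ L] [Algebra K L]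
    [IsScalarTower ℚ K L] [FiniteDimensional ℚ K] [IsGalois ℚ K]
    (α : K) (x : L) (hx : x ^ 2 = algebraMap K L α)
    (hgen : IntermediateField.adjoin K {x} = ⊤) (hdeg : Module.finrank K L = 2) :
    ∃ j : ℕ, Module.finrank ℚ ↥(IntermediateField.normalClosure ℚ L (AlgebraicClosure L)) =
      2 ^ j * Module.finrank ℚ K :=
  galoisClosure_degree_pow_two_general K L α x hx hgen
end

section
/- Let K be a field of characteristic zero, let E be an elliptic curve over K, let D ∈ K be a non-square element, let L = K(√D), and let E^D be the quadratic twist of E by D. Then there exist group homomorphisms Ψ : E(L) → E(K) × E^D(K) and Ψ̄ : E(K) × E^D(K) → E(L) such that Ψ̄ ∘ Ψ is multiplication by 2 on E(L) and Ψ ∘ Ψ̄ is multiplication by 2 on each factor of E(K) × E^D(K). Moreover, for every odd positive integer n, there is a group isomorphism E(L)[n] ≅ E(K)[n] × E^D(K)[n]. -/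
open WeierstrassCurve WeierstrassCurve.Affine

/-- The `n`-torsion subgroup `G[n]` of an additive commutative group `G`. -/
def nTorsion (G : Type*) [AddCommGroup G] (n : ℕ) : AddSubgroup G where
  carrier := {P | n • P = 0}
  zero_mem' := by simp
  add_mem' := by
    intro a b ha hb
    simp only [Set.mem_setOf_eq, smul_add] at *
    rw [ha, hb, add_zero]
  neg_mem' := by
    intro a ha
    simp only [Set.mem_setOf_eq, smul_neg] at *
    rw [ha, neg_zero]

/-!
Let `σ` be the nontrivial automorphism of `L = K(√D)`, so `σ √D = -√D`, and let `τ` be the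
involution it induces on `E(L)`. Points fixed by `τ` are exactly `E(K)`. Over `L` the change of
variables `(x, y) ↦ (Dx, D√D y)` is an isomorphism `E ≃ E^D`, and since `σ` negates `√D` it turns
`τ` into `-τ^D`; so the points with `τ P = -P` are exactly the image of `E^D(K)`. Now
`P ↦ (P + τ P, P - τ P)` and `(Q, R) ↦ Q + R` compose to `2` both ways, and `2` is invertible on
`n`-torsion for odd `n`.
-/

section AddCommGroup

variable {G G₁ G₂ H : Type*} [AddCommGroup G] [AddCommGroup G₁] [AddCommGroup G₂] [AddCommGroup H]

theorem exists_splitting_of_involutive (τ : G →+ G) (hτ : ∀ P, τ (τ P) = P)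
    {i₁ : G₁ →+ G} {i₂ : G₂ →+ G} (hi₁ : Function.Injective i₁) (hi₂ : Function.Injective i₂)
    (h₁ : ∀ P, P ∈ i₁.range ↔ τ P = P) (h₂ : ∀ P, P ∈ i₂.range ↔ τ P = -P) :
    ∃ (Ψ : G →+ G₁ × G₂) (Ψ' : G₁ × G₂ →+ G),
      (∀ P, Ψ' (Ψ P) = 2 • P) ∧ ∀ Q, Ψ (Ψ' Q) = 2 • Q := by
  let Ψ₁ : G →+ G₁ := (AddMonoidHom.ofInjective hi₁).symm.toAddMonoidHom.comp
    ((AddMonoidHom.id G + τ).codRestrict _ fun P ↦ (h₁ _).2 <| by simp [hτ, add_comm])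
  let Ψ₂ : G →+ G₂ := (AddMonoidHom.ofInjective hi₂).symm.toAddMonoidHom.comp
    ((AddMonoidHom.id G - τ).codRestrict _ fun P ↦ (h₂ _).2 <| by simp [hτ])
  have hΨ₁ (P : G) : i₁ (Ψ₁ P) = P + τ P := AddMonoidHom.apply_ofInjective_symm hi₁ _
  have hΨ₂ (P : G) : i₂ (Ψ₂ P) = P - τ P := AddMonoidHom.apply_ofInjective_symm hi₂ _
  refine ⟨Ψ₁.prod Ψ₂, i₁.coprod i₂, fun P ↦ ?_, fun ⟨Q₁, Q₂⟩ ↦ ?_⟩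
  · simp only [AddMonoidHom.coprod_apply, AddMonoidHom.prod_apply, hΨ₁, hΨ₂]
    abel
  · have hτ₁ := (h₁ (i₁ Q₁)).1 ⟨Q₁, rfl⟩
    have hτ₂ := (h₂ (i₂ Q₂)).1 ⟨Q₂, rfl⟩
    ext
    · apply hi₁
      simp only [AddMonoidHom.coprod_apply, AddMonoidHom.prod_apply, hΨ₁, map_add, hτ₁, hτ₂,
        Prod.smul_fst, Prod.fst_add, map_nsmul]
      abel
    · apply hi₂
      simp only [AddMonoidHom.coprod_apply, AddMonoidHom.prod_apply, hΨ₂, map_add, hτ₁, hτ₂,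
        Prod.smul_snd, Prod.snd_add, map_nsmul]
      abel

lemma nTorsion_prod (n : ℕ) : nTorsion (G × H) n = (nTorsion G n).prod (nTorsion H n) := by
  ext P
  exact Prod.ext_iff

lemma succ_nsmul_two_nsmul_of_mem_nTorsion {n t : ℕ} (hn : n = 2 * t + 1) {P : G}
    (hP : P ∈ nTorsion G n) : (t + 1) • 2 • P = P := by
  have hP' : n • P = 0 := hP
  rw [smul_smul, show (t + 1) * 2 = n + 1 by omega, succ_nsmul, hP', zero_add]

def AddMonoidHom.restrictNTorsion (φ : G →+ H) (n : ℕ) : nTorsion G n →+ nTorsion H n :=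
  (φ.comp (nTorsion G n).subtype).codRestrict _ fun P ↦
    show n • φ P = 0 by rw [← map_nsmul, show n • (P : G) = 0 from P.2, map_zero]

lemma nTorsion_addEquiv_of_comp_eq_two_nsmul (f : G →+ H) (g : H →+ G)
    (hgf : ∀ P, g (f P) = 2 • P) (hfg : ∀ Q, f (g Q) = 2 • Q) {n : ℕ} (hn : Odd n) :
    Nonempty (nTorsion G n ≃+ nTorsion H n) := by
  obtain ⟨t, rfl⟩ := hn
  refine ⟨(f.restrictNTorsion _).toAddEquiv (((t + 1) • g).restrictNTorsion _) ?_ ?_⟩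
  · ext P
    show (t + 1) • g (f P) = P
    rw [hgf, succ_nsmul_two_nsmul_of_mem_nTorsion rfl P.2]
  · ext Q
    show f ((t + 1) • g Q) = Q
    rw [map_nsmul, hfg, succ_nsmul_two_nsmul_of_mem_nTorsion rfl Q.2]

end AddCommGroup

section QuadraticExtension

open Polynomial IntermediateField

variable {K L : Type*} [Field K] [Field L] [Algebra K L] {D : K} {s : L}

lemma minpoly_eq_X_sq_sub_C (hD : ¬∃ r : K, r ^ 2 = D) (hs : s ^ 2 = algebraMap K L D) :
    minpoly K s = X ^ 2 - C D :=
  (minpoly.eq_of_irreducible_of_monic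
    (X_pow_sub_C_irreducible_of_prime Nat.prime_two fun r hr ↦ hD ⟨r, hr⟩)
    (by simp [hs]) (monic_X_pow_sub_C _ two_ne_zero)).symm

lemma isIntegral_of_sq_eq (hs : s ^ 2 = algebraMap K L D) : IsIntegral K s :=
  ⟨X ^ 2 - C D, monic_X_pow_sub_C _ two_ne_zero, by simp [hs]⟩

lemma finrank_eq_two_of_sq_eq (hD : ¬∃ r : K, r ^ 2 = D) (hs : s ^ 2 = algebraMap K L D)
    (hL : K⟮s⟯ = ⊤) : Module.finrank K L = 2 := by
  rw [← finrank_top', ← hL, adjoin.finrank (isIntegral_of_sq_eq hs), minpoly_eq_X_sq_sub_C hD hs,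
    natDegree_X_pow_sub_C]

lemma algEquiv_ext_of_adjoin_eq_top (hs : s ^ 2 = algebraMap K L D) (hL : K⟮s⟯ = ⊤)
    {σ τ : Gal(L/K)} (h : σ s = τ s) : σ = τ := by
  have hadj : Algebra.adjoin K {s} = ⊤ := by
    rw [← adjoin_simple_toSubalgebra_of_isAlgebraic (isIntegral_of_sq_eq hs).isAlgebraic, hL,
      top_toSubalgebra]
  exact AlgEquiv.coe_toAlgHom_injective <| AlgHom.ext_of_adjoin_eq_top hadj <| by simpa using h

lemma algEquiv_apply_eq_or_eq_neg (hs : s ^ 2 = algebraMap K L D) (σ : Gal(L/K)) :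
    σ s = s ∨ σ s = -s :=
  sq_eq_sq_iff_eq_or_eq_neg.mp <| by rw [← map_pow, hs, AlgEquiv.commutes]

theorem exists_conj_of_adjoin_eq_top [CharZero K] (hD : ¬∃ r : K, r ^ 2 = D)
    (hs : s ^ 2 = algebraMap K L D) (hL : K⟮s⟯ = ⊤) :
    ∃ σ : L →ₐ[K] L, σ s = -s ∧ (∀ z, σ (σ z) = z) ∧
      ∀ z, σ z = z → z ∈ Set.range (algebraMap K L) := by
  have : Algebra.IsQuadraticExtension K L := ⟨finrank_eq_two_of_sq_eq hD hs hL⟩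
  have : Nontrivial Gal(L/K) := by
    rw [← Finite.one_lt_card_iff_nontrivial, IsGalois.card_aut_eq_finrank,
      finrank_eq_two_of_sq_eq hD hs hL]
    norm_num
  obtain ⟨σ, hσ⟩ := exists_ne (1 : Gal(L/K))
  have hσs : σ s = -s := (algEquiv_apply_eq_or_eq_neg hs σ).resolve_left fun h ↦
    hσ <| algEquiv_ext_of_adjoin_eq_top hs hL h
  refine ⟨σ, hσs, fun z ↦ ?_, fun z hz ↦
    (IsGalois.mem_range_algebraMap_iff_fixed z).mpr fun τ ↦ ?_⟩
  · show σ (σ z) = z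
    rw [← AlgEquiv.mul_apply,
      algEquiv_ext_of_adjoin_eq_top (σ := σ * σ) (τ := 1) hs hL (by simp [hσs]), AlgEquiv.one_apply]
  · rcases algEquiv_apply_eq_or_eq_neg hs τ with h | h
    · rw [algEquiv_ext_of_adjoin_eq_top (τ := 1) hs hL h, AlgEquiv.one_apply]
    · rwa [algEquiv_ext_of_adjoin_eq_top hs hL (h.trans hσs.symm)]

end QuadraticExtension

namespace WeierstrassCurve

variable {F : Type*} [Field F]

/-- In Mathlib's convention this variable change moves points by `(x, y) ↦ (u²x, u³y)` and
coefficients by `aᵢ ↦ uⁱ aᵢ`. -/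
def VariableChange.scaling (u : Fˣ) : VariableChange F := ⟨u⁻¹, 0, 0, 0⟩

open VariableChange

lemma scaling_smul (u : Fˣ) (W : WeierstrassCurve F) :
    scaling u • W = ⟨u * W.a₁, u ^ 2 * W.a₂, u ^ 3 * W.a₃, u ^ 4 * W.a₄, u ^ 6 * W.a₆⟩ := by
  simp [variableChange_def, scaling]

lemma scaling_inv_smul_scaling_smul (u : Fˣ) (W : WeierstrassCurve F) :
    scaling u⁻¹ • scaling u • W = W := by
  ext <;> simp [scaling_smul]

namespace Affine

variable (W : Affine F) (u : Fˣ)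

lemma equation_scaling_smul (x y : F) :
    (scaling u • W).toAffine.Equation (u ^ 2 * x) (u ^ 3 * y) ↔ W.Equation x y := by
  rw [equation_iff', equation_iff']
  conv_rhs => rw [← mul_eq_zero_iff_left (pow_ne_zero 6 u.ne_zero)]
  rw [scaling_smul]
  ring_nf

lemma nonsingular_scaling_smul (x y : F) :
    (scaling u • W).toAffine.Nonsingular (u ^ 2 * x) (u ^ 3 * y) ↔ W.Nonsingular x y := by
  rw [nonsingular_iff', nonsingular_iff', equation_scaling_smul]
  refine and_congr_right' (or_congr ?_ ?_)
  · conv_rhs => rw [← mul_ne_zero_iff_left (pow_ne_zero 4 u.ne_zero)]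
    rw [scaling_smul]
    ring_nf
  · conv_rhs => rw [← mul_ne_zero_iff_left (pow_ne_zero 3 u.ne_zero)]
    rw [scaling_smul]
    ring_nf

lemma negY_scaling_smul (x y : F) :
    (scaling u • W).toAffine.negY (u ^ 2 * x) (u ^ 3 * y) = u ^ 3 * W.negY x y := by
  simp only [negY, scaling_smul]
  ring

lemma slope_scaling_smul [DecidableEq F] (x₁ x₂ y₁ y₂ : F) :
    (scaling u • W).toAffine.slope (u ^ 2 * x₁) (u ^ 2 * x₂) (u ^ 3 * y₁) (u ^ 3 * y₂) =
      u * W.slope x₁ x₂ y₁ y₂ := by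
  have hu := u.ne_zero
  by_cases hx : x₁ = x₂
  · by_cases hy : y₁ = W.negY x₂ y₂
    · rw [slope_of_Y_eq (by rw [hx]) (by rw [negY_scaling_smul, hy]), slope_of_Y_eq hx hy, mul_zero]
    · rw [slope_of_Y_ne (by rw [hx])
          (by rwa [negY_scaling_smul, Ne, mul_right_inj' (pow_ne_zero 3 hu)]),
        slope_of_Y_ne hx hy, negY_scaling_smul, ← mul_sub, scaling_smul]
      by_cases hd : y₁ - W.negY x₁ y₁ = 0
      · rw [hd, mul_zero, div_zero, div_zero, mul_zero]
      · field_simp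
  · rw [slope_of_X_ne (by rwa [Ne, mul_right_inj' (pow_ne_zero 2 hu)]), slope_of_X_ne hx]
    field_simp

lemma addX_scaling_smul (x₁ x₂ ℓ : F) :
    (scaling u • W).toAffine.addX (u ^ 2 * x₁) (u ^ 2 * x₂) (u * ℓ) = u ^ 2 * W.addX x₁ x₂ ℓ := by
  simp only [addX, scaling_smul]
  ring

lemma addY_scaling_smul (x₁ x₂ y₁ ℓ : F) :
    (scaling u • W).toAffine.addY (u ^ 2 * x₁) (u ^ 2 * x₂) (u ^ 3 * y₁) (u * ℓ) =
      u ^ 3 * W.addY x₁ x₂ y₁ ℓ := by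
  simp only [addY, negAddY, negY, addX, scaling_smul]
  ring

namespace Point

variable [DecidableEq F] {W W' : Affine F} {u : Fˣ}

def scalingHom (hW' : W' = scaling u • W) : W.Point →+ W'.Point where
  toFun
    | 0 => 0
    | some x y h => some (u ^ 2 * x) (u ^ 3 * y) <| by
        subst hW'
        exact (nonsingular_scaling_smul W u x y).mpr h
  map_zero' := rfl
  map_add' := by
    subst hW'
    rintro (_ | ⟨x₁, y₁, h₁⟩) (_ | ⟨x₂, y₂, h₂⟩)
    any_goals rfl
    by_cases hxy : x₁ = x₂ ∧ y₁ = W.negY x₂ y₂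
    · rw [add_of_Y_eq hxy.1 hxy.2, add_of_Y_eq (by rw [hxy.1]) (by rw [negY_scaling_smul, hxy.2])]
    · have hu := u.ne_zero
      rw [add_some hxy, add_some fun h ↦ hxy ⟨mul_left_cancel₀ (pow_ne_zero 2 hu) h.1,
        mul_left_cancel₀ (pow_ne_zero 3 hu) (negY_scaling_smul W u x₂ y₂ ▸ h.2)⟩]
      simp only [slope_scaling_smul, addX_scaling_smul, addY_scaling_smul]

lemma scalingHom_some (hW' : W' = scaling u • W) {x y : F} (h : W.Nonsingular x y) :
    scalingHom hW' (some x y h) =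
      some (u ^ 2 * x) (u ^ 3 * y) (by subst hW'; exact (nonsingular_scaling_smul W u x y).mpr h) :=
  rfl

lemma scalingHom_scalingHom (hW' : W' = scaling u • W) (hW : W = scaling u⁻¹ • W')
    (P : W.Point) : scalingHom hW (scalingHom hW' P) = P := by
  rcases P with _ | ⟨x, y, h⟩
  · rfl
  · simp only [scalingHom_some, some.injEq, Units.val_inv_eq_inv_val]
    constructor <;> field_simp

def scalingEquiv (hW' : W' = scaling u • W) : W.Point ≃+ W'.Point :=
  have hW : W = scaling u⁻¹ • W' := by rw [hW', scaling_inv_smul_scaling_smul]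
  (scalingHom hW').toAddEquiv (scalingHom hW)
    (AddMonoidHom.ext <| scalingHom_scalingHom hW' hW)
    (AddMonoidHom.ext <| scalingHom_scalingHom hW <| by rw [hW', inv_inv])

end Point

end Affine

end WeierstrassCurve

namespace WeierstrassCurve.Affine.Point

open VariableChange

variable {K L : Type*} [Field K] [Field L] [Algebra K L] [DecidableEq L]

lemma map_map_of_involutive {W : WeierstrassCurve K} {σ : L →ₐ[K] L} (hσ : ∀ z, σ (σ z) = z)
    (P : (W⁄L).Point) : map σ (map σ P) = P := by
  rcases P with _ | ⟨x, y, h⟩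
  · rfl
  · simp only [map_some, hσ]

lemma mem_range_baseChange_iff [DecidableEq K] (W : WeierstrassCurve K) {σ : L →ₐ[K] L}
    (hσ : ∀ z, σ z = z → z ∈ Set.range (algebraMap K L)) (P : (W⁄L).Point) :
    P ∈ (baseChange (W' := W) K L).range ↔ map σ P = P := by
  refine ⟨fun ⟨Q, hQ⟩ ↦ hQ ▸ map_baseChange σ Q, fun hP ↦ ?_⟩
  rcases P with _ | ⟨x, y, h⟩
  · exact ⟨0, rfl⟩
  · simp only [map_some, some.injEq] at hP
    obtain ⟨a, rfl⟩ := hσ x hP.1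
    obtain ⟨b, rfl⟩ := hσ y hP.2
    exact ⟨some a b ((baseChange_nonsingular W (f := Algebra.ofId K L)
      (algebraMap K L).injective a b).mp h), rfl⟩

lemma map_scalingHom {W W' : WeierstrassCurve K} (h₁ : W.a₁ = 0) (h₃ : W.a₃ = 0) {u : Lˣ}
    (hW' : W'⁄L = scaling u • W⁄L) {σ : L →ₐ[K] L} (hσ : σ u = -u) (P : (W⁄L).Point) :
    map σ (scalingHom hW' P) = scalingHom hW' (-map σ P) := by
  rcases P with _ | ⟨x, y, h⟩
  · rfl
  · simp only [scalingHom_some, map_some, neg_some, some.injEq, map_mul, map_pow, hσ, even_two,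
      Even.neg_pow, true_and, negY, WeierstrassCurve.baseChange, map_a₁, map_a₃, h₁, h₃,
      _root_.map_zero]
    ring

lemma mem_range_scalingEquiv_symm_comp_baseChange_iff [DecidableEq K] {W W' : WeierstrassCurve K}
    (h₁ : W.a₁ = 0) (h₃ : W.a₃ = 0) {u : Lˣ} (hW' : W'⁄L = scaling u • W⁄L) {σ : L →ₐ[K] L}
    (hσ : σ u = -u) (hσK : ∀ z, σ z = z → z ∈ Set.range (algebraMap K L)) (P : (W⁄L).Point) :
    P ∈ ((scalingEquiv hW').symm.toAddMonoidHom.comp (baseChange (W' := W') K L)).range ↔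
      map σ P = -P := by
  set φ := scalingEquiv hW'
  calc _ ↔ φ P ∈ (baseChange (W' := W') K L).range := by
        simp only [AddMonoidHom.mem_range, AddMonoidHom.comp_apply, AddEquiv.coe_toAddMonoidHom,
          φ.symm_apply_eq]
    _ ↔ map σ (φ P) = φ P := mem_range_baseChange_iff W' hσK _
    _ ↔ -map σ P = P := by rw [show map σ (φ P) = φ (-map σ P) from map_scalingHom h₁ h₃ hW' hσ P,
        φ.injective.eq_iff]
    _ ↔ map σ P = -P := neg_eq_iff_eq_neg

end WeierstrassCurve.Affine.Point

open VariableChange in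
lemma baseChange_twist_eq_scaling_smul {K L : Type*} [Field K] [Field L] [Algebra K L]
    {A B D : K} {s : L} (hs : s ^ 2 = algebraMap K L D) (hs₀ : s ≠ 0) :
    (⟨0, 0, 0, A * D ^ 2, B * D ^ 3⟩ : WeierstrassCurve K)⁄L =
      scaling (Units.mk0 s hs₀) • (⟨0, 0, 0, A, B⟩ : WeierstrassCurve K)⁄L := by
  rw [scaling_smul]
  ext <;> simp [WeierstrassCurve.baseChange, ← hs] <;> ring

open scoped Classical in
theorem twist_torsion_decomposition_general
    (K L : Type*) [Field K] [CharZero K] [Field L] [Algebra K L]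
    (A B D : K) (hnsq : ¬∃ r : K, r ^ 2 = D)
    (s : L) (hs : s ^ 2 = algebraMap K L D)
    (hL : IntermediateField.adjoin K {s} = ⊤)
    (W W' : WeierstrassCurve K)
    (hW : W = ⟨0, 0, 0, A, B⟩) (hW' : W' = ⟨0, 0, 0, A * D ^ 2, B * D ^ 3⟩) :
    ∃ (Ψ : (Affine.Point (Affine.baseChange W L)) →+ (Affine.Point (Affine.baseChange W K)) × (Affine.Point (Affine.baseChange W' K))) (Ψ' : (Affine.Point (Affine.baseChange W K)) × (Affine.Point (Affine.baseChange W' K)) →+ (Affine.Point (Affine.baseChange W L))),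
      (∀ P : (Affine.Point (Affine.baseChange W L)), Ψ' (Ψ P) = 2 • P) ∧
      (∀ Q : (Affine.Point (Affine.baseChange W K)) × (Affine.Point (Affine.baseChange W' K)), Ψ (Ψ' Q) = (2 • Q.1, 2 • Q.2)) ∧
      ∀ n : ℕ, Odd n →
        Nonempty (↥(nTorsion (Affine.Point (Affine.baseChange W L)) n) ≃+ ↥(nTorsion (Affine.Point (Affine.baseChange W K)) n) × ↥(nTorsion (Affine.Point (Affine.baseChange W' K)) n)) := by
  subst hW hW'
  obtain ⟨σ, hσs, hσσ, hσK⟩ := exists_conj_of_adjoin_eq_top hnsq hs hL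
  have hs₀ : s ≠ 0 := by
    rintro rfl
    exact hnsq ⟨0, (algebraMap K L).injective (by rw [map_pow, map_zero, hs])⟩
  have hW' := baseChange_twist_eq_scaling_smul (A := A) (B := B) hs hs₀
  obtain ⟨Ψ, Ψ', hΨ'Ψ, hΨΨ'⟩ := exists_splitting_of_involutive (Point.map σ)
    (Point.map_map_of_involutive hσσ) (Point.map_injective _)
    ((Point.scalingEquiv hW').symm.injective.comp (Point.map_injective _))
    (Point.mem_range_baseChange_iff _ hσK)
    (Point.mem_range_scalingEquiv_symm_comp_baseChange_iff rfl rfl hW' hσs hσK)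
  refine ⟨Ψ, Ψ', hΨ'Ψ, hΨΨ', fun n hn ↦ ?_⟩
  obtain ⟨e⟩ := nTorsion_addEquiv_of_comp_eq_two_nsmul Ψ Ψ' hΨ'Ψ hΨΨ' hn
  exact ⟨e.trans <| (AddEquiv.addSubgroupCongr (nTorsion_prod n)).trans (AddSubgroup.prodEquiv _ _)⟩

open scoped Classical in
/-- (González-Jiménez) Let `E : y² = x³ + Ax + B` be an elliptic curve over a field `K` of
characteristic zero, `D ∈ K` a non-square, `L = K(√D)`, and `E^D` the quadratic twist of `E`
by `D`. Then there are homomorphisms `Ψ : E(L) → E(K) × E^D(K)` and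
`Ψ̄ : E(K) × E^D(K) → E(L)` with `Ψ̄ ∘ Ψ = [2]` and `Ψ ∘ Ψ̄ = [2] × [2]`; moreover, for every
odd `n`, `E(L)[n] ≅ E(K)[n] × E^D(K)[n]`. -/
theorem twist_torsion_decomposition
    (K L : Type*) [Field K] [CharZero K] [Field L] [Algebra K L]
    (A B D : K) (hnsq : ¬∃ r : K, r ^ 2 = D)
    (s : L) (hs : s ^ 2 = algebraMap K L D)
    (hL : IntermediateField.adjoin K {s} = ⊤)
    (W W' : WeierstrassCurve K)
    (hW : W = ⟨0, 0, 0, A, B⟩) (hW' : W' = ⟨0, 0, 0, A * D ^ 2, B * D ^ 3⟩)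
    (hΔ : W.Δ ≠ 0) :
    ∃ (Ψ : (Affine.Point (Affine.baseChange W L)) →+ (Affine.Point (Affine.baseChange W K)) × (Affine.Point (Affine.baseChange W' K))) (Ψ' : (Affine.Point (Affine.baseChange W K)) × (Affine.Point (Affine.baseChange W' K)) →+ (Affine.Point (Affine.baseChange W L))),
      (∀ P : (Affine.Point (Affine.baseChange W L)), Ψ' (Ψ P) = 2 • P) ∧
      (∀ Q : (Affine.Point (Affine.baseChange W K)) × (Affine.Point (Affine.baseChange W' K)), Ψ (Ψ' Q) = (2 • Q.1, 2 • Q.2)) ∧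
      ∀ n : ℕ, Odd n →
        Nonempty (↥(nTorsion (Affine.Point (Affine.baseChange W L)) n) ≃+ ↥(nTorsion (Affine.Point (Affine.baseChange W K)) n) × ↥(nTorsion (Affine.Point (Affine.baseChange W' K)) n)) :=
  twist_torsion_decomposition_general K L A B D hnsq s hs hL W W' hW hW'
end

section
/- Let E be an elliptic curve defined over ℚ and let K be a finite Galois extension of ℚ whose degree [K:ℚ] is coprime to a prime p. Suppose that for some positive integer n one has E(K)[pⁿ] = ⟨P_{pⁿ}, Q_p⟩ ≅ (ℤ/pⁿℤ) ⊕ (ℤ/pℤ), where P_{pⁿ} ∈ E(K) is a point of order pⁿ that is not defined over ℚ and Q_p ∈ E(ℚ) is a point of order p. Then [ℚ(P_{pⁿ}) : ℚ] divides p − 1. -/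
/-!
Let `G = Gal(K/ℚ)` act on `E(K)[pⁿ]`, which has basis `P, Q` with `Q` rational. Every `σ ∈ G` acts
by `σ P = a_σ P + b_σ Q`, `σ Q = Q` with `a_σ ∈ (ℤ/pⁿ)ˣ`, `b_σ ∈ ℤ/p`, and composing gives
`a_{στ} = a_σ a_τ`, `b_{στ} = a_τ b_σ + b_τ`. So `σ ↦ a_σ` is a character of `G` with values in a
group of order `pⁿ⁻¹(p - 1)`, and on its kernel `σ ↦ b_σ` is a homomorphism to `ℤ/p` whose kernel is
the stabilizer of `P`, that is `Gal(K/ℚ(P))`. Hence `[ℚ(P) : ℚ]` divides `pⁿ(p - 1)`; it also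
divides `|G|`, which is prime to `p`, so it divides `p - 1`.
-/

open WeierstrassCurve WeierstrassCurve.Affine

theorem smul_mem_nTorsion {G M : Type*} [Monoid G] [AddCommGroup M] [DistribMulAction G M]
    {m : ℕ} (σ : G) {t : M} (ht : t ∈ nTorsion M m) : σ • t ∈ nTorsion M m := by
  change m • σ • t = 0
  rw [smul_comm, show m • t = 0 from ht, smul_zero]

section ZModProd

variable {M : Type*} [AddCommGroup M] {a b : ℕ}

theorem AddMonoidHom.apply_eq_val_nsmul_add [NeZero a] [NeZero b] (f : ZMod a × ZMod b →+ M)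
    (m : ZMod a × ZMod b) : f m = m.1.val • f (1, 0) + m.2.val • f (0, 1) := by
  rw [← map_nsmul, ← map_nsmul, ← map_add]
  congr 1
  ext <;> simp

noncomputable def zmodPairHom (P Q : M) (hP : (a : ℤ) • P = 0) (hQ : (b : ℤ) • Q = 0) :
    ZMod a × ZMod b →+ M :=
  (ZMod.lift a ⟨zmultiplesHom M P, hP⟩).coprod (ZMod.lift b ⟨zmultiplesHom M Q, hQ⟩)

variable {P Q : M} {hP : (a : ℤ) • P = 0} {hQ : (b : ℤ) • Q = 0}

theorem zmodPairHom_intCast (i j : ℤ) : zmodPairHom P Q hP hQ (i, j) = i • P + j • Q := by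
  simp [zmodPairHom, ZMod.lift_coe]

theorem range_zmodPairHom :
    (zmodPairHom P Q hP hQ).range = AddSubgroup.closure {P, Q} := by
  ext t
  rw [AddMonoidHom.mem_range, AddSubgroup.mem_closure_pair]
  constructor
  · rintro ⟨⟨i, j⟩, rfl⟩
    obtain ⟨i, rfl⟩ := ZMod.intCast_surjective i
    obtain ⟨j, rfl⟩ := ZMod.intCast_surjective j
    exact ⟨i, j, (zmodPairHom_intCast i j).symm⟩
  · rintro ⟨i, j, rfl⟩
    exact ⟨(i, j), zmodPairHom_intCast i j⟩

end ZModProd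

theorem AddMonoidHom.injective_of_range_addEquiv {A M : Type*} [AddGroup A] [Finite A]
    [AddGroup M] (f : A →+ M) (e : f.range ≃+ A) : Function.Injective f :=
  Subtype.val_injective.comp <|
    (Finite.injective_iff_surjective_of_equiv e.symm.toEquiv).mpr f.rangeRestrict_surjective

section AffineAction

variable {G M : Type*} [Group G] [AddCommGroup M] [DistribMulAction G M] {p n : ℕ}

variable {f : ZMod (p ^ n) × ZMod p →+ M}

noncomputable def smulCoord (hrange : ∀ σ : G, σ • f (1, 0) ∈ f.range) (σ : G) :
    ZMod (p ^ n) × ZMod p :=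
  (hrange σ).choose

variable (hrange : ∀ σ : G, σ • f (1, 0) ∈ f.range)

theorem apply_smulCoord (σ : G) : f (smulCoord hrange σ) = σ • f (1, 0) :=
  (hrange σ).choose_spec

theorem smul_apply_eq_apply_smulCoord [NeZero p] (hfix : ∀ σ : G, σ • f (0, 1) = f (0, 1)) (σ : G)
    (m : ZMod (p ^ n) × ZMod p) : σ • f m = f (m.1.val • smulCoord hrange σ + (0, m.2)) := by
  rw [f.apply_eq_val_nsmul_add m, smul_add, smul_comm, smul_comm σ, hfix, map_add, map_nsmul,
    apply_smulCoord, f.apply_eq_val_nsmul_add (0, m.2)]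
  simp

theorem smulCoord_mul [NeZero p] (hf : Function.Injective f)
    (hfix : ∀ σ : G, σ • f (0, 1) = f (0, 1)) (σ τ : G) :
    smulCoord hrange (σ * τ) =
      (smulCoord hrange τ).1.val • smulCoord hrange σ + (0, (smulCoord hrange τ).2) :=
  hf <| by
    rw [apply_smulCoord, mul_smul, ← apply_smulCoord hrange τ,
      smul_apply_eq_apply_smulCoord hrange hfix]

theorem smulCoord_eq_iff (hf : Function.Injective f) (σ : G) :
    smulCoord hrange σ = (1, 0) ↔ σ ∈ MulAction.stabilizer G (f (1, 0)) := by
  rw [MulAction.mem_stabilizer_iff, ← apply_smulCoord hrange, hf.eq_iff]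

noncomputable def smulCoordFstHom [NeZero p] (hf : Function.Injective f)
    (hfix : ∀ σ : G, σ • f (0, 1) = f (0, 1)) : G →* (ZMod (p ^ n))ˣ :=
  MonoidHom.toHomUnits
    { toFun σ := (smulCoord hrange σ).1
      map_one' := by rw [(smulCoord_eq_iff hrange hf 1).mpr (one_mem _)]
      map_mul' σ τ := by simp [smulCoord_mul hrange hf hfix, mul_comm] }

theorem mem_ker_smulCoordFstHom [NeZero p] (hf : Function.Injective f)
    (hfix : ∀ σ : G, σ • f (0, 1) = f (0, 1)) (σ : G) :
    σ ∈ (smulCoordFstHom hrange hf hfix).ker ↔ (smulCoord hrange σ).1 = 1 := by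
  rw [MonoidHom.mem_ker, Units.ext_iff]
  rfl

noncomputable def smulCoordSndHom [Fact (1 < p ^ n)] [NeZero p] (hf : Function.Injective f)
    (hfix : ∀ σ : G, σ • f (0, 1) = f (0, 1)) :
    (smulCoordFstHom hrange hf hfix).ker →* Multiplicative (ZMod p) where
  toFun σ := Multiplicative.ofAdd (smulCoord hrange σ).2
  map_one' := by rw [OneMemClass.coe_one, (smulCoord_eq_iff hrange hf 1).mpr (one_mem _)]; rfl
  map_mul' σ τ := by
    rw [Subgroup.coe_mul, smulCoord_mul hrange hf hfix,
      (mem_ker_smulCoordFstHom hrange hf hfix τ).mp τ.2]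
    simp [ZMod.val_one]

theorem stabilizer_le_ker_smulCoordFstHom [NeZero p] (hf : Function.Injective f)
    (hfix : ∀ σ : G, σ • f (0, 1) = f (0, 1)) :
    MulAction.stabilizer G (f (1, 0)) ≤ (smulCoordFstHom hrange hf hfix).ker := fun σ hσ ↦ by
  rw [mem_ker_smulCoordFstHom, (smulCoord_eq_iff hrange hf σ).mpr hσ]

theorem stabilizer_subgroupOf_eq_ker_smulCoordSndHom [Fact (1 < p ^ n)] [NeZero p]
    (hf : Function.Injective f) (hfix : ∀ σ : G, σ • f (0, 1) = f (0, 1)) :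
    (MulAction.stabilizer G (f (1, 0))).subgroupOf (smulCoordFstHom hrange hf hfix).ker =
      (smulCoordSndHom hrange hf hfix).ker := by
  ext σ
  rw [Subgroup.mem_subgroupOf, ← smulCoord_eq_iff hrange hf, MonoidHom.mem_ker, Prod.ext_iff,
    ← mem_ker_smulCoordFstHom hrange hf hfix]
  exact and_iff_right σ.2

theorem index_stabilizer_dvd_sub_one (hp : p.Prime) (hn : 0 < n) (hcop : (Nat.card G).Coprime p)
    (hf : Function.Injective f) (hrange : ∀ σ : G, σ • f (1, 0) ∈ f.range)
    (hfix : ∀ σ : G, σ • f (0, 1) = f (0, 1)) :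
    (MulAction.stabilizer G (f (1, 0))).index ∣ p - 1 := by
  have : Fact p.Prime := ⟨hp⟩
  have : Fact (1 < p ^ n) := ⟨Nat.one_lt_pow hn.ne' hp.one_lt⟩
  set χ := smulCoordFstHom hrange hf hfix
  have hχ : χ.ker.index ∣ p ^ (n - 1) * (p - 1) := by
    rw [Subgroup.index_ker, ← Nat.totient_prime_pow hp hn, ← ZMod.card_units_eq_totient,
      ← Nat.card_eq_fintype_card]
    exact Subgroup.card_subgroup_dvd_card _
  have hβ : (MulAction.stabilizer G (f (1, 0))).relIndex χ.ker ∣ p := by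
    rw [Subgroup.relIndex, stabilizer_subgroupOf_eq_ker_smulCoordSndHom, Subgroup.index_ker]
    simpa using Subgroup.card_subgroup_dvd_card (smulCoordSndHom hrange hf hfix).range
  have hdvd : (MulAction.stabilizer G (f (1, 0))).index ∣ p ^ n * (p - 1) := by
    rw [← Subgroup.relIndex_mul_index (stabilizer_le_ker_smulCoordFstHom hrange hf hfix)]
    refine (mul_dvd_mul hβ hχ).trans (dvd_of_eq ?_)
    rw [← mul_assoc, ← pow_succ', Nat.sub_add_cancel hn]
  exact ((hcop.coprime_dvd_left (Subgroup.index_dvd_card _)).pow_right n).dvd_of_dvd_mul_left hdvd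

end AffineAction

theorem IntermediateField.mem_fixingSubgroup_adjoin_iff {F K : Type*} [Field F] [Field K]
    [Algebra F K] {S : Set K} (σ : K ≃ₐ[F] K) :
    σ ∈ (adjoin F S).fixingSubgroup ↔ ∀ s ∈ S, σ s = s := by
  refine ⟨fun h s hs ↦ h ⟨s, subset_adjoin F S hs⟩, fun h ↦ ?_⟩
  rintro ⟨z, hz⟩
  have := adjoin_algHom_ext F (φ₁ := (σ : K →ₐ[F] K).comp (adjoin F S).val)
    (φ₂ := (adjoin F S).val) h
  exact DFunLike.congr_fun this ⟨z, hz⟩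

namespace WeierstrassCurve.Affine.Point

variable {F K : Type*} [Field F] [Field K] [Algebra F K] [DecidableEq K] {W : WeierstrassCurve F}

noncomputable instance : DistribMulAction (K ≃ₐ[F] K) (W.baseChange K).toAffine.Point where
  smul σ := map (W' := W) (σ : K →ₐ[F] K)
  one_smul P := by cases P <;> rfl
  mul_smul σ τ P := by cases P <;> rfl
  smul_zero _ := rfl
  smul_add σ := map_add _

theorem smul_some_eq_some_iff (σ : K ≃ₐ[F] K) {x y x' y' : K}
    (h : (W.baseChange K).toAffine.Nonsingular x y)
    (h' : (W.baseChange K).toAffine.Nonsingular x' y') :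
    σ • some x y h = some x' y' h' ↔ σ x = x' ∧ σ y = y' :=
  Iff.of_eq (some.injEq ..)

theorem stabilizer_some {x y : K} (h : (W.baseChange K).toAffine.Nonsingular x y) :
    MulAction.stabilizer (K ≃ₐ[F] K) (some x y h) =
      (IntermediateField.adjoin F {x, y}).fixingSubgroup := by
  ext σ
  rw [MulAction.mem_stabilizer_iff, IntermediateField.mem_fixingSubgroup_adjoin_iff,
    smul_some_eq_some_iff]
  simp only [Set.mem_insert_iff, Set.mem_singleton_iff, forall_eq_or_imp, forall_eq]

theorem smul_some_of_mem_bot {x y : K} (h : (W.baseChange K).toAffine.Nonsingular x y)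
    (hx : x ∈ (⊥ : IntermediateField F K)) (hy : y ∈ (⊥ : IntermediateField F K))
    (σ : K ≃ₐ[F] K) : σ • some x y h = some x y h := by
  rw [← MulAction.mem_stabilizer_iff, stabilizer_some]
  refine IntermediateField.fixingSubgroup_le (K2 := ⊥) ?_ (by simp)
  rw [IntermediateField.adjoin_le_iff, Set.insert_subset_iff, Set.singleton_subset_iff]
  exact ⟨hx, hy⟩

end WeierstrassCurve.Affine.Point

open scoped Classical in
theorem degree_of_field_of_definition_dvd_p_sub_one_general
    (K : Type*) [Field K] [NumberField K] [IsGalois ℚ K]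
    (W : WeierstrassCurve ℚ)
    (p : ℕ) (hp : p.Prime) (hcop : Nat.Coprime (Module.finrank ℚ K) p)
    (n : ℕ) (hn : 0 < n)
    (x y : K) (h : (W.baseChange K).toAffine.Nonsingular x y)
    (hordP : addOrderOf (Point.some x y h : (W.baseChange K).toAffine.Point) = p ^ n)
    (xq yq : K) (hq : (W.baseChange K).toAffine.Nonsingular xq yq)
    (hxq : xq ∈ (⊥ : IntermediateField ℚ K)) (hyq : yq ∈ (⊥ : IntermediateField ℚ K))
    (hordQ : addOrderOf (Point.some xq yq hq : (W.baseChange K).toAffine.Point) = p)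
    (hgen : AddSubgroup.closure {(Point.some x y h : (W.baseChange K).toAffine.Point), (Point.some xq yq hq : (W.baseChange K).toAffine.Point)} =
      nTorsion (W.baseChange K).toAffine.Point (p ^ n))
    (hiso : Nonempty (↥(nTorsion (W.baseChange K).toAffine.Point (p ^ n)) ≃+ ZMod (p ^ n) × ZMod p)) :
    Module.finrank ℚ ↥(IntermediateField.adjoin ℚ {x, y}) ∣ (p - 1) := by
  have : NeZero p := ⟨hp.ne_zero⟩
  have hP : ((p ^ n : ℕ) : ℤ) • Point.some x y h = 0 := by
    rw [natCast_zsmul, ← hordP, addOrderOf_nsmul_eq_zero]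
  have hQ : ((p : ℕ) : ℤ) • Point.some xq yq hq = 0 := by
    rw [natCast_zsmul, ← hordQ, addOrderOf_nsmul_eq_zero]
  set f := zmodPairHom _ _ hP hQ
  have hrange : f.range = nTorsion _ (p ^ n) := range_zmodPairHom.trans hgen
  have hfP : f (1, 0) = Point.some x y h := by
    simpa using zmodPairHom_intCast (hP := hP) (hQ := hQ) 1 0
  have hfQ : f (0, 1) = Point.some xq yq hq := by
    simpa using zmodPairHom_intCast (hP := hP) (hQ := hQ) 0 1
  rw [IntermediateField.finrank_eq_fixingSubgroup_index, ← Point.stabilizer_some h, ← hfP]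
  refine index_stabilizer_dvd_sub_one hp hn ?_ (f.injective_of_range_addEquiv (hrange ▸ hiso.some))
    (fun σ ↦ ?_) (fun σ ↦ ?_)
  · rwa [IsGalois.card_aut_eq_finrank]
  · rw [hrange]
    exact smul_mem_nTorsion σ (hrange ▸ ⟨(1, 0), rfl⟩)
  · rw [hfQ]
    exact Point.smul_some_of_mem_bot hq hxq hyq σ

open scoped Classical in
/-- Let `E` be an elliptic curve over `ℚ` and `K` a finite Galois extension of `ℚ` of degree
coprime to a prime `p`. If `E(K)[pⁿ] = ⟨P, Q⟩ ≅ ℤ/pⁿ ⊕ ℤ/p`, where `P ∈ E(K)` has order `pⁿ`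
and is not defined over `ℚ` and `Q ∈ E(ℚ)` has order `p`, then `[ℚ(P) : ℚ]` divides `p − 1`. -/
theorem degree_of_field_of_definition_dvd_p_sub_one
    (K : Type*) [Field K] [NumberField K] [IsGalois ℚ K]
    (W : WeierstrassCurve ℚ) [W.IsElliptic]
    (p : ℕ) (hp : p.Prime) (hcop : Nat.Coprime (Module.finrank ℚ K) p)
    (n : ℕ) (hn : 0 < n)
    (x y : K) (h : (W.baseChange K).toAffine.Nonsingular x y)
    (hordP : addOrderOf (Point.some x y h : (W.baseChange K).toAffine.Point) = p ^ n)
    (hPnotrat : IntermediateField.adjoin ℚ {x, y} ≠ ⊥)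
    (xq yq : K) (hq : (W.baseChange K).toAffine.Nonsingular xq yq)
    (hxq : xq ∈ (⊥ : IntermediateField ℚ K)) (hyq : yq ∈ (⊥ : IntermediateField ℚ K))
    (hordQ : addOrderOf (Point.some xq yq hq : (W.baseChange K).toAffine.Point) = p)
    (hgen : AddSubgroup.closure {(Point.some x y h : (W.baseChange K).toAffine.Point), (Point.some xq yq hq : (W.baseChange K).toAffine.Point)} =
      nTorsion (W.baseChange K).toAffine.Point (p ^ n))
    (hiso : Nonempty (↥(nTorsion (W.baseChange K).toAffine.Point (p ^ n)) ≃+ ZMod (p ^ n) × ZMod p)) :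
    Module.finrank ℚ ↥(IntermediateField.adjoin ℚ {x, y}) ∣ (p - 1) :=
  degree_of_field_of_definition_dvd_p_sub_one_general K W p hp hcop n hn x y h hordP xq yq hq hxq
    hyq hordQ hgen hiso
end
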